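/- arXiv:2012.10409 — 4 statements merged into one kernel-verified Lean document; each statement's English description precedes it below -/
import Mathlib

section
/- For every positive integer m there exists a finite simple graph G on exactly 7m vertices (namely the balanced blow-up of C̄₇ with each vertex replaced by an independent set of size m) such that G is locally bipartite, every vertex of G has degree exactly 4m, and G is not 3-colourable. Consequently the bound 4/7 in the statement 'every locally bipartite graph with δ(G) > (4/7)·|G| is 3-colourable' cannot be replaced by any smaller constant. -/
open SimpleGraph

/-- A finite simple graph is *locally bipartite* if each neighbourhood induces a
bipartite (equivalently, 2-colourable) graph. -/
def LocallyBipartite {V : Type*} (G : SimpleGraph V) : Prop :=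
  ∀ v : V, (G.induce (G.neighborSet v)).Colorable 2

/-- `C̄₇`, the complement of the 7-cycle: `i` and `j` are adjacent iff they differ by
`±2` or `±3` modulo 7. -/
def C7bar : SimpleGraph (ZMod 7) :=
  SimpleGraph.fromRel (fun i j => j = i + 2 ∨ j = i + 3)

/-- `H₀`, the Moser spindle: the 7-cycle `v₀v₁…v₆` together with the edges
`v₀v₂`, `v₀v₅`, `v₁v₃`, `v₄v₆`. -/
def H0 : SimpleGraph (ZMod 7) :=
  SimpleGraph.fromRel (fun i j =>
    j = i + 1 ∨ (i = 0 ∧ j = 2) ∨ (i = 0 ∧ j = 5) ∨ (i = 1 ∧ j = 3) ∨ (i = 4 ∧ j = 6))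

/-- `H₁`: the 7-cycle `v₀v₁…v₆` together with the edges
`v₃v₅`, `v₅v₀`, `v₀v₂`, `v₂v₄`, `v₆v₁`. -/
def H1 : SimpleGraph (ZMod 7) :=
  SimpleGraph.fromRel (fun i j =>
    j = i + 1 ∨ (i = 3 ∧ j = 5) ∨ (i = 5 ∧ j = 0) ∨ (i = 0 ∧ j = 2) ∨
      (i = 2 ∧ j = 4) ∨ (i = 6 ∧ j = 1))

/-- `H₂`: the 7-cycle `v₀v₁…v₆` together with the edges
`v₁v₃`, `v₃v₅`, `v₅v₀`, `v₀v₂`, `v₂v₄`, `v₄v₆`. -/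
def H2 : SimpleGraph (ZMod 7) :=
  SimpleGraph.fromRel (fun i j =>
    j = i + 1 ∨ (i = 1 ∧ j = 3) ∨ (i = 3 ∧ j = 5) ∨ (i = 5 ∧ j = 0) ∨
      (i = 0 ∧ j = 2) ∨ (i = 2 ∧ j = 4) ∨ (i = 4 ∧ j = 6))

/-- `H₂⁺`: the graph `H₂` (on the `some` vertices) together with an extra vertex
(`none`) joined to exactly `v₀`, `v₂` and `v₅`. -/
def H2plus : SimpleGraph (Option (ZMod 7)) :=
  SimpleGraph.fromRel (fun a b =>
    match a, b with
    | some i, some j =>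
        j = i + 1 ∨ (i = 1 ∧ j = 3) ∨ (i = 3 ∧ j = 5) ∨ (i = 5 ∧ j = 0) ∨
          (i = 0 ∧ j = 2) ∨ (i = 2 ∧ j = 4) ∨ (i = 4 ∧ j = 6)
    | none, some j => j = 0 ∨ j = 2 ∨ j = 5
    | _, _ => False)

/-- A graph `G` contains a copy of `H` if there is an injective graph homomorphism
from `H` to `G`, i.e. `G` has a (not necessarily induced) subgraph isomorphic to `H`. -/
def ContainsCopy {W V : Type*} (H : SimpleGraph W) (G : SimpleGraph V) : Prop :=
  ∃ f : H →g G, Function.Injective f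

/-- A pair of vertices `u, v` is *dense* if the common neighbourhood of `u` and `v`
contains an edge. -/
def DensePair {V : Type*} (G : SimpleGraph V) (u v : V) : Prop :=
  ∃ x y : V, G.Adj u x ∧ G.Adj v x ∧ G.Adj u y ∧ G.Adj v y ∧ G.Adj x y

/-- A pair of distinct vertices `u, v` is *sparse* if `u` and `v` are not adjacent and
the common neighbourhood of `u` and `v` contains no edge. -/
def SparsePair {V : Type*} (G : SimpleGraph V) (u v : V) : Prop :=
  u ≠ v ∧ ¬ G.Adj u v ∧ ¬ DensePair G u v

/-- A set of vertices is independent if it contains no edge. -/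
def IsIndepSet {V : Type*} (G : SimpleGraph V) (s : Set V) : Prop :=
  ∀ ⦃u⦄, u ∈ s → ∀ ⦃v⦄, v ∈ s → ¬ G.Adj u v

/-! The balanced blow-up of `C̄₇` is the pullback of `C̄₇` along the projection
`ZMod 7 × Fin m → ZMod 7`. Pullbacks preserve local bipartiteness, this one multiplies degrees
by `m`, and a section of the projection pulls colourings back to `C̄₇`. So it suffices that `C̄₇`
is locally bipartite, 4-regular and not 3-colourable; the last holds because any three of its
vertices span an edge, so three colour classes cover at most 6 of its 7 vertices. -/

theorem LocallyBipartite.comap {V W : Type*} {H : SimpleGraph V} (hH : LocallyBipartite H)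
    (f : W → V) : LocallyBipartite (H.comap f) := fun v =>
  (hH (f v)).of_hom ⟨fun w => ⟨f w.1, w.2⟩, id⟩

namespace SimpleGraph

variable {V W : Type*}

theorem Colorable.of_comap {H : SimpleGraph V} {f : W → V} (hf : f.Surjective) {n : ℕ}
    (h : (H.comap f).Colorable n) : H.Colorable n :=
  h.of_hom ⟨Function.surjInv hf, by simp [Function.surjInv_eq hf]⟩

theorem Colorable.card_le_indepNum_mul [Fintype V] {G : SimpleGraph V} {n : ℕ}
    (h : G.Colorable n) : Fintype.card V ≤ G.indepNum * n := by
  classical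
  obtain ⟨C⟩ := h
  simpa using Finset.card_le_mul_card_image_of_maps_to (s := Finset.univ)
    (t := Finset.univ) (fun v _ => Finset.mem_univ (C v)) G.indepNum fun c _ =>
      IsIndepSet.card_le_indepNum (by simpa [Coloring.colorClass] using C.isIndepSet_colorClass c)

theorem ncard_neighborSet_comap_equiv (H : SimpleGraph V) (e : W ≃ V) (w : W) :
    ((H.comap e).neighborSet w).ncard = (H.neighborSet (e w)).ncard :=
  Set.ncard_preimage_of_injective_subset_range e.injective fun v _ => e.surjective v

abbrev blowUp (H : SimpleGraph V) (m : ℕ) : SimpleGraph (V × Fin m) := H.comap Prod.fst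

theorem ncard_neighborSet_blowUp (H : SimpleGraph V) (m : ℕ) (u : V × Fin m) :
    ((H.blowUp m).neighborSet u).ncard = (H.neighborSet u.1).ncard * m := by
  have : (H.blowUp m).neighborSet u = H.neighborSet u.1 ×ˢ Set.univ := by ext; simp
  rw [this, Set.ncard_prod, Set.ncard_univ, Nat.card_fin]

end SimpleGraph

instance : DecidableRel C7bar.Adj := by
  unfold C7bar
  infer_instance

theorem C7bar_ncard_neighborSet (i : ZMod 7) : (C7bar.neighborSet i).ncard = 4 := by
  rw [Set.ncard_eq_toFinset_card', ← neighborFinset_def, card_neighborFinset_eq_degree]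
  revert i
  decide

-- The neighbourhood of `i` is `{i+2, i+3, i+4, i+5}`, and its edges all join `{i+2, i+3}`
-- to `{i+4, i+5}`.
theorem C7bar_edge_in_neighborSet_crosses : ∀ i a b : ZMod 7, C7bar.Adj i a → C7bar.Adj i b →
    C7bar.Adj a b → ((a - i = 2 ∨ a - i = 3) ↔ ¬(b - i = 2 ∨ b - i = 3)) := by
  decide

theorem C7bar_locallyBipartite : LocallyBipartite C7bar := fun i => by
  refine (Coloring.mk (fun a => decide (a.1 - i = 2 ∨ a.1 - i = 3)) ?_).colorable
  rintro ⟨a, ha⟩ ⟨b, hb⟩ hab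
  have := C7bar_edge_in_neighborSet_crosses i a b ha hb hab
  simp only [Ne, decide_eq_decide]
  tauto

theorem C7bar_adj_of_three : ∀ a b c : ZMod 7, a ≠ b → a ≠ c → b ≠ c →
    C7bar.Adj a b ∨ C7bar.Adj a c ∨ C7bar.Adj b c := by
  decide

theorem C7bar_indepNum_le_two : C7bar.indepNum ≤ 2 := by
  obtain ⟨s, hs, hcard⟩ := C7bar.exists_isNIndepSet_indepNum
  rw [← hcard]
  by_contra! h
  obtain ⟨a, ha, b, hb, c, hc, hab, hac, hbc⟩ := Finset.two_lt_card.mp h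
  rcases C7bar_adj_of_three a b c hab hac hbc with h | h | h
  · exact hs ha hb hab h
  · exact hs ha hc hac h
  · exact hs hb hc hbc h

theorem C7bar_not_colorable_three : ¬ C7bar.Colorable 3 := fun h => by
  have h7 : 7 ≤ C7bar.indepNum * 3 := by simpa using h.card_le_indepNum_mul
  have := C7bar_indepNum_le_two
  omega

/-- For every `m ≥ 1` there is a graph on exactly `7m` vertices (the balanced blow-up of
`C̄₇`) which is locally bipartite, `4m`-regular, and not 3-colourable; hence the constant
`4/7` in the 3-colourability theorem is optimal. -/
theorem exists_locallyBipartite_regular_not_three_colorable (m : ℕ) (hm : 0 < m) :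
    ∃ G : SimpleGraph (Fin (7 * m)),
      LocallyBipartite G ∧
      (∀ v : Fin (7 * m), (G.neighborSet v).ncard = 4 * m) ∧
      ¬ G.Colorable 3 := by
  have : Nonempty (Fin m) := ⟨⟨0, hm⟩⟩
  let e : ZMod 7 × Fin m ≃ Fin (7 * m) := finProdFinEquiv
  refine ⟨(C7bar.blowUp m).comap e.symm, ?_, fun v => ?_, fun h => ?_⟩
  · exact (C7bar_locallyBipartite.comap _).comap _
  · rw [ncard_neighborSet_comap_equiv, ncard_neighborSet_blowUp, C7bar_ncard_neighborSet]
  · exact C7bar_not_colorable_three ((h.of_comap e.symm.surjective).of_comap Prod.fst_surjective)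
end

section
/- Let F be a finite simple graph that is twin-free and edge-maximal locally bipartite, and let G be a finite simple locally bipartite graph. If there is a graph homomorphism from F to G, then F is isomorphic to an induced subgraph of G. -/
open SimpleGraph

/-- The graph obtained from `F` by adding the edge `uv` (when `u ≠ v`). -/
def AddEdge {V : Type*} (F : SimpleGraph V) (u v : V) : SimpleGraph V :=
  F ⊔ SimpleGraph.fromRel (fun a b => a = u ∧ b = v)

/-!
A homomorphism `f : F →g G` into a locally bipartite graph pulls local bipartiteness back to `F`.
If `f` mapped a non-edge `uv` of `F` onto an edge of `G`, it would still be a homomorphism from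
`F + uv`, which would therefore be locally bipartite, against the edge-maximality of `F`. So `f`
reflects adjacency; then vertices with the same image have the same neighbourhood, and
twin-freeness makes `f` injective, i.e. an induced embedding.
-/

section

variable {V W : Type*} {F : SimpleGraph V} {G : SimpleGraph W}

theorem SimpleGraph.Hom.mapsTo_neighborSet (f : F →g G) (x : V) :
    Set.MapsTo f (F.neighborSet x) (G.neighborSet (f x)) :=
  fun _ hy => f.map_adj hy

theorem LocallyBipartite.of_hom (f : F →g G) (hG : LocallyBipartite G) : LocallyBipartite F :=
  fun x => (hG (f x)).of_hom (induceHom f (f.mapsTo_neighborSet x))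

def SimpleGraph.Hom.liftAddEdge (f : F →g G) {u v : V} (h : G.Adj (f u) (f v)) :
    AddEdge F u v →g G where
  toFun := f
  map_rel' := by
    rintro a b (hab | ⟨-, ⟨rfl, rfl⟩ | ⟨rfl, rfl⟩⟩)
    · exact f.map_adj hab
    · exact h
    · exact h.symm

theorem SimpleGraph.Hom.adj_of_adj_map_of_edgeMaximal
    (hFmax : ∀ u v : V, u ≠ v → ¬ F.Adj u v → ¬ LocallyBipartite (AddEdge F u v))
    (hG : LocallyBipartite G) (f : F →g G) {u v : V} (h : G.Adj (f u) (f v)) : F.Adj u v := by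
  by_contra huv
  exact hFmax u v (ne_of_apply_ne f h.ne) huv (hG.of_hom (f.liftAddEdge h))

theorem SimpleGraph.Hom.injective_of_twinFree
    (htwinfree : ∀ u v : V, F.neighborSet u = F.neighborSet v → u = v) (f : F →g G)
    (hreflect : ∀ u v : V, G.Adj (f u) (f v) → F.Adj u v) : Function.Injective f := by
  have neighborSet_subset {a b : V} (hab : f a = f b) : F.neighborSet a ⊆ F.neighborSet b :=
    fun w hw => hreflect b w (hab ▸ f.map_adj hw)
  exact fun a b hab =>
    htwinfree a b ((neighborSet_subset hab).antisymm (neighborSet_subset hab.symm))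

end

theorem twinFree_edgeMaximal_hom_implies_induced_general {V W : Type}
    (F : SimpleGraph V) (G : SimpleGraph W)
    (htwinfree : ∀ u v : V, F.neighborSet u = F.neighborSet v → u = v)
    (hFmax : ∀ u v : V, u ≠ v → ¬ F.Adj u v → ¬ LocallyBipartite (AddEdge F u v))
    (hGlb : LocallyBipartite G)
    (hhom : Nonempty (F →g G)) :
    Nonempty (F ↪g G) := by
  obtain ⟨f⟩ := hhom
  have hreflect (u v : V) : G.Adj (f u) (f v) → F.Adj u v :=
    f.adj_of_adj_map_of_edgeMaximal hFmax hGlb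
  exact ⟨⟨⟨f, f.injective_of_twinFree htwinfree hreflect⟩,
    fun {u v} => ⟨hreflect u v, f.map_adj⟩⟩⟩

/-- If `F` is twin-free and edge-maximal locally bipartite, and `F` is homomorphic to a
locally bipartite graph `G`, then `F` is an induced subgraph of `G`. -/
theorem twinFree_edgeMaximal_hom_implies_induced {V W : Type} [Fintype V] [Fintype W]
    (F : SimpleGraph V) (G : SimpleGraph W)
    (htwinfree : ∀ u v : V, F.neighborSet u = F.neighborSet v → u = v)
    (hFlb : LocallyBipartite F)
    (hFmax : ∀ u v : V, u ≠ v → ¬ F.Adj u v → ¬ LocallyBipartite (AddEdge F u v))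
    (hGlb : LocallyBipartite G)
    (hhom : Nonempty (F →g G)) :
    Nonempty (F ↪g G) :=
  twinFree_edgeMaximal_hom_implies_induced_general F G htwinfree hFmax hGlb hhom
end

section
/- Let G be a finite simple graph with δ(G) > (1/2)·|G| and let I be an independent set of G of maximum size. Then for every two distinct vertices u, v ∈ I, the pair u, v is dense, i.e. the common neighbourhood of u and v contains an edge of G. -/
/-! If `u, v` lie in an independent set `I`, then `N(u) ∪ N(v)` misses `I`, so
`d(u) + d(v) - |N(u) ∩ N(v)| + |I| ≤ |G|`. If the pair is not dense, `N(u) ∩ N(v)` is itself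
independent, hence no larger than a maximum independent set `I`, which forces
`d(u) + d(v) ≤ |G|`, contradicting `δ(G) > |G|/2`. -/

open SimpleGraph

namespace SimpleGraph

variable {V : Type*} (G : SimpleGraph V)

theorem isIndepSet_commonNeighbors_of_not_densePair {u v : V} (h : ¬ DensePair G u v) :
    _root_.IsIndepSet G (G.commonNeighbors u v) :=
  fun _ hx _ hy hxy => h ⟨_, _, hx.1, hx.2, hy.1, hy.2, hxy⟩

theorem disjoint_neighborSet_union_of_isIndepSet {I : Set V} (hI : _root_.IsIndepSet G I)
    {u v : V} (hu : u ∈ I) (hv : v ∈ I) : Disjoint (G.neighborSet u ∪ G.neighborSet v) I := by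
  rw [Set.disjoint_left]
  rintro z (hz | hz) hzI
  · exact hI hu hzI hz
  · exact hI hv hzI hz

variable [Fintype V] [DecidableRel G.Adj]

theorem ncard_neighborSet (v : V) : (G.neighborSet v).ncard = G.degree v := by
  rw [Set.ncard_eq_toFinset_card', ← card_neighborSet_eq_degree, Set.toFinset_card]

theorem degree_add_degree_add_ncard_le {I : Set V} (hI : _root_.IsIndepSet G I)
    {u v : V} (hu : u ∈ I) (hv : v ∈ I) :
    G.degree u + G.degree v + I.ncard ≤ Fintype.card V + (G.commonNeighbors u v).ncard := by
  have hunion : (G.neighborSet u ∪ G.neighborSet v).ncard + (G.commonNeighbors u v).ncard =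
      G.degree u + G.degree v := by
    rw [commonNeighbors_eq, Set.ncard_union_add_ncard_inter _ _ (Set.toFinite _)
      (Set.toFinite _), ncard_neighborSet, ncard_neighborSet]
  have hcover : (G.neighborSet u ∪ G.neighborSet v).ncard + I.ncard ≤ Fintype.card V := by
    rw [← Set.ncard_union_eq (G.disjoint_neighborSet_union_of_isIndepSet hI hu hv)
      (Set.toFinite _) (Set.toFinite _), ← Nat.card_eq_fintype_card, ← Set.ncard_univ]
    exact Set.ncard_le_ncard (Set.subset_univ _)
  omega

theorem densePair_of_card_lt_degree_add_degree {I : Set V} (hI : _root_.IsIndepSet G I)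
    (hImax : ∀ J : Set V, _root_.IsIndepSet G J → J.ncard ≤ I.ncard)
    {u v : V} (hu : u ∈ I) (hv : v ∈ I) (hdeg : Fintype.card V < G.degree u + G.degree v) :
    DensePair G u v := by
  by_contra hsparse
  have hW := hImax _ (G.isIndepSet_commonNeighbors_of_not_densePair hsparse)
  have := G.degree_add_degree_add_ncard_le hI hu hv
  omega

end SimpleGraph

/-- In a graph of minimum degree greater than `|G|/2`, every two distinct vertices of a
largest independent set form a dense pair. -/
theorem dense_pairs_in_max_independent_set {V : Type} [Fintype V]
    (G : SimpleGraph V) [DecidableRel G.Adj]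
    (hdeg : (1 / 2 : ℝ) * (Fintype.card V : ℝ) < (G.minDegree : ℝ))
    (I : Set V) (hI : _root_.IsIndepSet G I)
    (hImax : ∀ J : Set V, _root_.IsIndepSet G J → J.ncard ≤ I.ncard) :
    ∀ u ∈ I, ∀ v ∈ I, u ≠ v → DensePair G u v := by
  intro u hu v hv _
  have hcard : Fintype.card V < 2 * G.minDegree := by
    have : (Fintype.card V : ℝ) < 2 * (G.minDegree : ℝ) := by linarith
    exact_mod_cast this
  refine G.densePair_of_card_lt_degree_add_degree hI hImax hu hv ?_
  have := G.minDegree_le_degree u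
  have := G.minDegree_le_degree v
  omega
end

section
/- Let G be a finite simple graph with δ(G) > (1/2)·|G| and suppose v₁v₂v₃v₄ is an induced 4-cycle in G (edges v₁v₂, v₂v₃, v₃v₄, v₄v₁ and non-edges v₁v₃, v₂v₄). Then at least one of the pairs v₁, v₃ and v₂, v₄ is dense. -/
open SimpleGraph

/-!
If neither pair is dense, a common neighbour of `v₁, v₂` is adjacent to neither `v₃` nor `v₄`:
together with `v₂` (resp. `v₁`) it would span an edge in the common neighbourhood of `v₁, v₃`
(resp. `v₂, v₄`). So `N(v₁) ∩ N(v₂)` and `N(v₃) ∪ N(v₄)` are disjoint, and symmetrically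
`N(v₃) ∩ N(v₄)` and `N(v₁) ∪ N(v₂)` are. Inclusion–exclusion then bounds the sum of the four
degrees by `2|G|`, whereas the degree condition makes it exceed `2|G|`.
-/

open Finset in
theorem Finset.card_add_card_add_card_add_card_le_of_disjoint {α : Type*} [Fintype α]
    [DecidableEq α] {s t u w : Finset α}
    (hst : Disjoint (s ∩ t) (u ∪ w)) (huw : Disjoint (u ∩ w) (s ∪ t)) :
    #s + #t + (#u + #w) ≤ 2 * Fintype.card α := by
  have h₁ : #(s ∩ t) + #(u ∪ w) ≤ Fintype.card α :=
    card_union_of_disjoint hst ▸ card_le_univ _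
  have h₂ : #(u ∩ w) + #(s ∪ t) ≤ Fintype.card α :=
    card_union_of_disjoint huw ▸ card_le_univ _
  have := card_union_add_card_inter s t
  have := card_union_add_card_inter u w
  omega

namespace SimpleGraph

variable {V : Type*} {G : SimpleGraph V}

theorem DensePair.symm {u v : V} (h : DensePair G u v) : DensePair G v u := by
  obtain ⟨x, y, hux, hvx, huy, hvy, hxy⟩ := h
  exact ⟨x, y, hvx, hux, hvy, huy, hxy⟩

theorem disjoint_neighborFinset_inter_union_of_not_densePair [DecidableEq V] [G.LocallyFinite]
    {a b c d : V} (hab : G.Adj a b) (hbc : G.Adj b c) (hda : G.Adj d a)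
    (hac : ¬ DensePair G a c) (hbd : ¬ DensePair G b d) :
    Disjoint (G.neighborFinset a ∩ G.neighborFinset b)
      (G.neighborFinset c ∪ G.neighborFinset d) := by
  rw [Finset.disjoint_left]
  intro x hx hx'
  simp only [Finset.mem_inter, Finset.mem_union, mem_neighborFinset] at hx hx'
  obtain ⟨hax, hbx⟩ := hx
  rcases hx' with hcx | hdx
  · exact hac ⟨x, b, hax, hcx, hab, hbc.symm, hbx.symm⟩
  · exact hbd ⟨x, a, hbx, hdx, hab.symm, hda, hax.symm⟩

end SimpleGraph

theorem induced_four_cycle_dense_pair_general {V : Type} [Fintype V]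
    (G : SimpleGraph V) [DecidableRel G.Adj]
    (hdeg : (1 / 2 : ℝ) * (Fintype.card V : ℝ) < (G.minDegree : ℝ))
    (v₁ v₂ v₃ v₄ : V)
    (h12 : G.Adj v₁ v₂) (h23 : G.Adj v₂ v₃) (h34 : G.Adj v₃ v₄) (h41 : G.Adj v₄ v₁) :
    DensePair G v₁ v₃ ∨ DensePair G v₂ v₄ := by
  classical
  by_contra! h
  obtain ⟨h13, h24⟩ := h
  have hdeg' : Fintype.card V < 2 * G.minDegree := by
    have : (Fintype.card V : ℝ) < 2 * G.minDegree := by linarith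
    exact_mod_cast this
  have hsum := Finset.card_add_card_add_card_add_card_le_of_disjoint
    (disjoint_neighborFinset_inter_union_of_not_densePair h12 h23 h41 h13 h24)
    (disjoint_neighborFinset_inter_union_of_not_densePair h34 h41 h23
      (mt DensePair.symm h13) (mt DensePair.symm h24))
  simp only [card_neighborFinset_eq_degree] at hsum
  linarith [G.minDegree_le_degree v₁, G.minDegree_le_degree v₂, G.minDegree_le_degree v₃,
    G.minDegree_le_degree v₄]

/-- In a graph of minimum degree greater than `|G|/2`, at least one of the two non-edges
of an induced 4-cycle is a dense pair. -/
theorem induced_four_cycle_dense_pair {V : Type} [Fintype V]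
    (G : SimpleGraph V) [DecidableRel G.Adj]
    (hdeg : (1 / 2 : ℝ) * (Fintype.card V : ℝ) < (G.minDegree : ℝ))
    (v₁ v₂ v₃ v₄ : V)
    (h12 : G.Adj v₁ v₂) (h23 : G.Adj v₂ v₃) (h34 : G.Adj v₃ v₄) (h41 : G.Adj v₄ v₁)
    (h13ne : v₁ ≠ v₃) (h24ne : v₂ ≠ v₄)
    (h13 : ¬ G.Adj v₁ v₃) (h24 : ¬ G.Adj v₂ v₄) :
    DensePair G v₁ v₃ ∨ DensePair G v₂ v₄ :=
  induced_four_cycle_dense_pair_general G hdeg v₁ v₂ v₃ v₄ h12 h23 h34 h41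
end
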